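/- arXiv:2601.02489 — 3 statements merged into one kernel-verified Lean document; each statement's English description precedes it below -/
import Mathlib

section
/- Let Y be a compact abelian topological group and f : Y → ℝ a continuous polynomial function, i.e., there exists n ≥ 0 such that the (n+1)-fold finite difference Δ_h^{n+1} f vanishes for all h ∈ Y. Then f is constant. -/
/-- The finite difference operator `(Δ_h f)(y) = f (y + h) - f y`. -/
def fdiff {Y : Type*} [Add Y] (h : Y) (f : Y → ℝ) : Y → ℝ :=
  fun y => f (y + h) - f y

/-!
By compactness `f` is bounded. Fix `y` and `h` and restrict `f` to the orbit `k ↦ y + k • h`: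
this is a bounded sequence whose `(n+1)`-st difference vanishes. If its difference were a
nonzero constant `c`, the sequence would grow like `k • c`; by induction on `n` all its
differences vanish, so `f (y + h) = f y`.
-/

open Set Bornology fwdDiff

lemma eq_add_nsmul_of_fwdDiff_eq_const {G : Type*} [AddCommGroup G] {a : ℕ → G} {c : G}
    (ha : ∀ k, Δ_[1] a k = c) (k : ℕ) : a k = a 0 + k • c := by
  induction k with
  | zero => simp
  | succ k ih => rw [succ_nsmul, ← add_assoc, ← ih, ← ha k, fwdDiff, add_sub_cancel]

lemma isBounded_range_fwdDiff {M E : Type*} [AddCommMonoid M] [SeminormedAddCommGroup E]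
    (h : M) {f : M → E} (hf : IsBounded (range f)) : IsBounded (range (Δ_[h] f)) :=
  (isBounded_sub hf hf).subset <|
    range_subset_iff.2 fun _ => sub_mem_sub (mem_range_self _) (mem_range_self _)

section NormedSpace

variable {E : Type*} [NormedAddCommGroup E] [NormedSpace ℝ E]

lemma eq_zero_of_isBounded_range_of_fwdDiff_eq_const {a : ℕ → E} {c : E}
    (hbdd : IsBounded (range a)) (ha : ∀ k, Δ_[1] a k = c) : c = 0 := by
  obtain ⟨C, hC⟩ := (isBounded_sub hbdd hbdd).exists_norm_le
  have hlin : ∀ k : ℕ, k * ‖c‖ ≤ C := fun k => by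
    rw [← nsmul_eq_mul, ← RCLike.norm_nsmul ℝ,
      eq_sub_of_add_eq' (eq_add_nsmul_of_fwdDiff_eq_const ha k).symm]
    exact hC _ (sub_mem_sub (mem_range_self _) (mem_range_self _))
  by_contra hc
  have hpos : 0 < ‖c‖ := norm_pos_iff.2 hc
  obtain ⟨k, hk⟩ := exists_nat_gt (C / ‖c‖)
  exact (hlin k).not_gt ((div_lt_iff₀ hpos).1 hk)

lemma fwdDiff_one_eq_zero_of_isBounded_range {a : ℕ → E} (hbdd : IsBounded (range a)) {n : ℕ}
    (ha : (Δ_[1])^[n + 1] a = 0) : Δ_[1] a = 0 := by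
  induction n generalizing a with
  | zero => simpa using ha
  | succ n ih =>
    have hΔΔ : Δ_[1] (Δ_[1] a) = 0 :=
      ih (isBounded_range_fwdDiff 1 hbdd) (by rwa [← Function.iterate_succ_apply])
    have hconst : ∀ k, Δ_[1] a k = Δ_[1] a 0 := fun k => by
      simpa using eq_add_nsmul_of_fwdDiff_eq_const (c := 0) (fun k => congrFun hΔΔ k) k
    funext k
    rw [hconst k, eq_zero_of_isBounded_range_of_fwdDiff_eq_const hbdd hconst]
    rfl

lemma fwdDiff_iter_comp_add_nsmul {M G : Type*} [AddCommMonoid M] [AddCommGroup G] (f : M → G)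
    (y h : M) (m : ℕ) :
    (Δ_[1])^[m] (fun k : ℕ => f (y + k • h)) = fun k => (Δ_[h])^[m] f (y + k • h) := by
  funext k
  simp [fwdDiff_iter_eq_sum_shift, add_nsmul, add_assoc]

lemma fwdDiff_eq_zero_of_isBounded_range {M : Type*} [AddCommMonoid M] {f : M → E}
    (hbdd : IsBounded (range f)) (h : M) {n : ℕ} (hf : (Δ_[h])^[n + 1] f = 0) : Δ_[h] f = 0 := by
  funext y
  have horbit : Δ_[1] (fun k : ℕ => f (y + k • h)) = 0 := by
    refine fwdDiff_one_eq_zero_of_isBounded_range (n := n)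
      (hbdd.subset (range_subset_iff.2 fun _ => mem_range_self _)) ?_
    rw [fwdDiff_iter_comp_add_nsmul, hf]
    rfl
  simpa [horbit] using (congrFun (fwdDiff_iter_comp_add_nsmul f y h 1) 0).symm

end NormedSpace

theorem stmt_5_general {Y : Type*} [AddCommGroup Y] [TopologicalSpace Y]
    [CompactSpace Y] (f : Y → ℝ) (hf : Continuous f) (n : ℕ)
    (hpoly : ∀ h : Y, (fdiff h)^[n + 1] f = 0) :
    ∀ y₁ y₂ : Y, f y₁ = f y₂ := by
  have hfwd : ∀ h : Y, (Δ_[h])^[n + 1] f = 0 := hpoly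
  intro y₁ y₂
  have hconst := fwdDiff_eq_zero_of_isBounded_range (isCompact_range hf).isBounded (y₂ - y₁)
    (hfwd (y₂ - y₁))
  simpa [fwdDiff, sub_eq_zero, eq_comm] using congrFun hconst y₁

/-- A continuous polynomial on a compact abelian topological group is constant. -/
theorem stmt_5 {Y : Type*} [AddCommGroup Y] [TopologicalSpace Y] [IsTopologicalAddGroup Y]
    [CompactSpace Y] (f : Y → ℝ) (hf : Continuous f) (n : ℕ)
    (hpoly : ∀ h : Y, (fdiff h)^[n + 1] f = 0) :
    ∀ y₁ y₂ : Y, f y₁ = f y₂ :=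
  stmt_5_general f hf n hpoly
end

section
/- Let X be a finite cyclic group of odd order with dual Y, and α an automorphism of X with adjoint α̃. Suppose μ₁, μ₂ are distributions on X whose characteristic functions satisfy the Heyde equation μ̂₁(u+v) μ̂₂(u+α̃v) = μ̂₁(u−v) μ̂₂(u−α̃v) for all u,v ∈ Y, and {y ∈ Y : |μ̂₁(y)| = |μ̂₂(y)| = 1} = {0}. Then μ₁ = μ₂ = μ and the uniform distribution on the subgroup (I+α)(X) is a factor of μ. -/
open MeasureTheory
open scoped ENNReal

/-!
Identify the dual of `ZMod n` with `ZMod n` through `y ↦ stdAddChar (y * ·)`; then `α` and its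
adjoint are both multiplication by the unit `a = α 1`. Since `n` is odd, the trivial-intersection
hypothesis makes `1 - a` a unit; with `r = (1 - a)⁻¹`, two specialisations of the Heyde equation
read `μ̂₁ (2r t) μ̂₂ ((1+a) r t) = μ̂₂ t` and `μ̂₁ ((1+a) r t) μ̂₂ (2ar t) = μ̂₁ (-t)`.
So `|μ̂₂ t| ≤ |μ̂₁ (2r t)|` and `|μ̂₁ t| ≤ |μ̂₂ (2ar t)|`, and summing over the group (the
multipliers are units) turns both into equalities. If `μ̂₁ y ≠ 0` or `μ̂₂ y ≠ 0`, this gives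
`|μ̂₁ z| = |μ̂₂ z| = 1` at `z = (1+a) r y` (a character of modulus one keeps modulus one at all
multiples), hence `(1+a) y = 0`. Both characteristic functions thus live on the annihilator of
`(I+α)(X)`, where the first relation says they agree; so `μ₁ = μ₂`, and `μ̂` is unchanged by the
factor `m̂_{(I+α)(X)}`, which equals `1` on that annihilator.
-/

lemma Fintype.apply_eq_of_le_comp_of_le_comp {ι M : Type*} [Fintype ι] [AddCommMonoid M]
    [PartialOrder M] [IsOrderedCancelAddMonoid M] {f g : ι → M} {σ τ : ι → ι}
    (hσ : σ.Bijective) (hτ : τ.Bijective) (hg : ∀ i, g i ≤ f (σ i)) (hf : ∀ i, f i ≤ g (τ i))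
    (i : ι) : f (σ i) = g i := by
  have hsum : ∑ i, g i = ∑ i, f (σ i) := by
    refine le_antisymm (Finset.sum_le_sum fun i _ ↦ hg i) ?_
    calc ∑ i, f (σ i) = ∑ i, f i := hσ.sum_comp f
      _ ≤ ∑ i, g (τ i) := Finset.sum_le_sum fun i _ ↦ hf i
      _ = ∑ i, g i := hτ.sum_comp g
  exact ((Finset.sum_eq_sum_iff_of_le fun i _ ↦ hg i).mp hsum i (Finset.mem_univ i)).symm

lemma norm_eq_one_of_mul_eq_one {K : Type*} [NormedDivisionRing K] {z w : K} (hz : ‖z‖ ≤ 1)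
    (hw : ‖w‖ ≤ 1) (h : z * w = 1) : ‖z‖ = 1 ∧ ‖w‖ = 1 := by
  have hzw : ‖z‖ * ‖w‖ = 1 := by rw [← norm_mul, h, norm_one]
  constructor <;> nlinarith [norm_nonneg z, norm_nonneg w]

lemma ProbabilityTheory.uniformOn_eq_smul_count_restrict {Ω : Type*} [MeasurableSpace Ω]
    [MeasurableSingletonClass Ω] {s : Set Ω} (hs : s.Finite) :
    uniformOn s = (Nat.card s : ℝ≥0∞)⁻¹ • Measure.count.restrict s := by
  rw [uniformOn, cond, Measure.count_apply_finite s hs, Nat.card_eq_card_finite_toFinset hs]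

lemma ZMod.map_eq_map_one_mul {n : ℕ} {F : Type*} [FunLike F (ZMod n) (ZMod n)]
    [AddMonoidHomClass F (ZMod n) (ZMod n)] (f : F) (x : ZMod n) : f x = f 1 * x := by
  rw [mul_comm, ← x.intCast_zmod_cast, ← zsmul_eq_mul, ← map_zsmul, zsmul_one]

lemma ZMod.isPrimitive_toCircle {n : ℕ} [NeZero n] :
    (ZMod.toCircle : AddChar (ZMod n) Circle).IsPrimitive := by
  refine AddChar.zmod_char_primitive_of_eq_one_only_at_zero _ _ fun t ht ↦ ?_
  rwa [← AddChar.map_zero_eq_one (ZMod.toCircle (N := n)), ZMod.injective_toCircle.eq_iff] at ht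

namespace ZMod

open Complex ComplexConjugate

variable {n : ℕ} [NeZero n] [MeasurableSpace (ZMod n)]

noncomputable def charFun (μ : Measure (ZMod n)) (y : ZMod n) : ℂ := ∫ x, stdAddChar (y * x) ∂μ

variable {μ ν : Measure (ZMod n)}

lemma charFun_zero [IsProbabilityMeasure μ] : charFun μ 0 = 1 := by
  simp [charFun]

lemma norm_charFun_le_one [IsProbabilityMeasure μ] (y : ZMod n) : ‖charFun μ y‖ ≤ 1 := by
  refine (norm_integral_le_of_norm_le_const (C := 1) (.of_forall fun x ↦ ?_)).trans_eq (by simp)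
  exact (Circle.norm_coe _).le

lemma norm_charFun_neg (y : ZMod n) : ‖charFun μ (-y)‖ = ‖charFun μ y‖ := by
  simp only [charFun, neg_mul, AddChar.map_neg_eq_conj, integral_conj, RCLike.norm_conj]

lemma charFun_eq_one [IsProbabilityMeasure μ] {y : ZMod n}
    (h : ∀ᵐ x ∂μ, stdAddChar (y * x) = 1) : charFun μ y = 1 := by
  simp [charFun, integral_congr_ae h]

section Discrete

variable [DiscreteMeasurableSpace (ZMod n)]

lemma charFun_eq_dft [IsFiniteMeasure μ] (y : ZMod n) :
    charFun μ y = 𝓕 (fun x ↦ (μ.real {x} : ℂ)) (-y) := by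
  rw [charFun, integral_fintype .of_finite, dft_apply]
  refine Finset.sum_congr rfl fun x _ ↦ ?_
  rw [mul_neg, neg_neg, mul_comm x y, real_smul, smul_eq_mul, mul_comm]

lemma charFun_injective [IsFiniteMeasure μ] [IsFiniteMeasure ν] (h : charFun μ = charFun ν) :
    μ = ν := by
  have hdft : 𝓕 (fun x ↦ (μ.real {x} : ℂ)) = 𝓕 (fun x ↦ (ν.real {x} : ℂ)) := by
    ext k
    simpa [charFun_eq_dft] using congrFun h (-k)
  refine Measure.ext_of_singleton fun x ↦ ?_
  have := congrFun (dft.injective hdft) x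
  simp only [ofReal_inj] at this
  exact (measureReal_eq_measureReal_iff (measure_ne_top _ _) (measure_ne_top _ _)).mp this

lemma charFun_conv [IsFiniteMeasure μ] [IsFiniteMeasure ν] (y : ZMod n) :
    charFun (μ ∗ ν) y = charFun μ y * charFun ν y := by
  simp only [charFun]
  rw [integral_conv .of_finite]
  simp [mul_add, AddChar.map_add_eq_mul, integral_const_mul, integral_mul_const]

lemma ae_stdAddChar_eq_charFun [IsProbabilityMeasure μ] {y : ZMod n} (h : ‖charFun μ y‖ = 1) :
    ∀ᵐ x ∂μ, stdAddChar (y * x) = charFun μ y := by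
  set c := charFun μ y
  have hsq (x : ZMod n) :
      ‖stdAddChar (y * x) - c‖ ^ 2 = 2 - 2 * (stdAddChar (y * x) * conj c).re := by
    rw [← normSq_eq_norm_sq, normSq_sub, normSq_eq_norm_sq, normSq_eq_norm_sq, h,
      stdAddChar_apply, Circle.norm_coe]
    ring
  -- the `μ`-mean of `‖stdAddChar (y * ·) - c‖ ^ 2` is `2 - 2 ‖c‖ ^ 2 = 0`
  have hvar : ∫ x, ‖stdAddChar (y * x) - c‖ ^ 2 ∂μ = 0 := by
    simp_rw [hsq, ← RCLike.re_to_complex]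
    rw [integral_sub .of_finite .of_finite, integral_const_mul, integral_re (by exact .of_finite),
      integral_mul_const, show ∫ x, stdAddChar (y * x) ∂μ = c from rfl, RCLike.re_to_complex,
      mul_conj, normSq_eq_norm_sq, h]
    simp
  filter_upwards [(integral_eq_zero_iff_of_nonneg (fun x ↦ by positivity) .of_finite).mp hvar]
    with x hx
  simpa [sub_eq_zero] using hx

lemma norm_charFun_mul_eq_one [IsProbabilityMeasure μ] {y : ZMod n} (h : ‖charFun μ y‖ = 1)
    (c : ZMod n) : ‖charFun μ (c * y)‖ = 1 := by
  have hpow : charFun μ (c * y) = charFun μ y ^ c.val := by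
    calc charFun μ (c * y) = ∫ x, stdAddChar (y * x) ^ c.val ∂μ := by
          simp_rw [charFun, ← AddChar.map_nsmul_eq_pow, nsmul_eq_mul, natCast_zmod_val, mul_assoc]
      _ = ∫ _, charFun μ y ^ c.val ∂μ :=
          integral_congr_ae ((ae_stdAddChar_eq_charFun h).mono fun x hx ↦ congrArg (· ^ c.val) hx)
      _ = charFun μ y ^ c.val := by simp
  rw [hpow, norm_pow, h, one_pow]

end Discrete

/-- The dual of `ZMod n` is `ZMod n`, paired by `stdAddChar (y * x)`; the adjoint of multiplication
by `a` is again multiplication by `a`. -/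
def HeydeEquation (μ₁ μ₂ : Measure (ZMod n)) (a : ZMod n) : Prop :=
  ∀ u v, charFun μ₁ (u + v) * charFun μ₂ (u + a * v) = charFun μ₁ (u - v) * charFun μ₂ (u - a * v)

namespace HeydeEquation

variable {μ₁ μ₂ : Measure (ZMod n)} {a : ZMod n} (heyde : HeydeEquation μ₁ μ₂ a)
include heyde

lemma isUnit_one_sub [IsProbabilityMeasure μ₁] [IsProbabilityMeasure μ₂]
    (htriv : ∀ y, ‖charFun μ₁ y‖ = 1 → ‖charFun μ₂ y‖ = 1 → y = 0) (h2 : IsUnit (2 : ZMod n)) :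
    IsUnit (1 - a) := by
  refine IsUnit.isUnit_iff_mulLeft_bijective.mpr (Finite.injective_iff_bijective.mp ?_)
  refine (injective_iff_map_eq_zero (AddMonoidHom.mulLeft (1 - a))).mpr fun v hv ↦ ?_
  replace hv : (1 - a) * v = 0 := hv
  have h := heyde v v
  rw [show a * v = v by linear_combination -hv, sub_self, charFun_zero, charFun_zero, one_mul,
    ← two_mul] at h
  obtain ⟨h₁, h₂⟩ := norm_eq_one_of_mul_eq_one (norm_charFun_le_one _) (norm_charFun_le_one _) h
  exact h2.mul_right_eq_zero.mp (htriv _ h₁ h₂)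

section Relations

variable {r : ZMod n} (hr : (1 - a) * r = 1)
include hr

lemma charFun_two_mul_mul_charFun_eq [IsProbabilityMeasure μ₁] (t : ZMod n) :
    charFun μ₁ (2 * r * t) * charFun μ₂ ((1 + a) * r * t) = charFun μ₂ t := by
  have h := heyde (r * t) (r * t)
  rwa [show r * t + r * t = 2 * r * t by ring, show r * t + a * (r * t) = (1 + a) * r * t by ring,
    sub_self, show r * t - a * (r * t) = t by linear_combination t * hr, charFun_zero,
    one_mul] at h

lemma charFun_mul_charFun_two_mul_eq [IsProbabilityMeasure μ₂] (t : ZMod n) :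
    charFun μ₁ ((1 + a) * r * t) * charFun μ₂ (2 * a * r * t) = charFun μ₁ (-t) := by
  have h := heyde (a * r * t) (r * t)
  rwa [show a * r * t + r * t = (1 + a) * r * t by ring,
    show a * r * t + a * (r * t) = 2 * a * r * t by ring,
    show a * r * t - r * t = -t by linear_combination -t * hr, ← mul_assoc, sub_self,
    charFun_zero, mul_one] at h

lemma norm_charFun_eq [IsProbabilityMeasure μ₁] [IsProbabilityMeasure μ₂]
    (h2 : IsUnit (2 : ZMod n)) (ha : IsUnit a) (t : ZMod n) :
    ‖charFun μ₁ (2 * r * t)‖ = ‖charFun μ₂ t‖ ∧ ‖charFun μ₂ (2 * a * r * t)‖ = ‖charFun μ₁ t‖ := by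
  have hr' : IsUnit r := .of_mul_eq_one_right _ hr
  have hσ := IsUnit.isUnit_iff_mulLeft_bijective.mp (h2.mul hr')
  have hτ := IsUnit.isUnit_iff_mulLeft_bijective.mp ((h2.mul ha).mul hr')
  have h₂ (t : ZMod n) : ‖charFun μ₂ t‖ ≤ ‖charFun μ₁ (2 * r * t)‖ := by
    rw [← charFun_two_mul_mul_charFun_eq heyde hr, norm_mul]
    exact mul_le_of_le_one_right (norm_nonneg _) (norm_charFun_le_one _)
  have h₁ (t : ZMod n) : ‖charFun μ₁ t‖ ≤ ‖charFun μ₂ (2 * a * r * t)‖ := by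
    rw [← norm_charFun_neg, ← charFun_mul_charFun_two_mul_eq heyde hr, norm_mul]
    exact mul_le_of_le_one_left (norm_nonneg _) (norm_charFun_le_one _)
  exact ⟨Fintype.apply_eq_of_le_comp_of_le_comp (f := fun t ↦ ‖charFun μ₁ t‖) hσ hτ h₂ h₁ t,
    Fintype.apply_eq_of_le_comp_of_le_comp (f := fun t ↦ ‖charFun μ₂ t‖) hτ hσ h₁ h₂ t⟩

end Relations

variable [DiscreteMeasurableSpace (ZMod n)] [IsProbabilityMeasure μ₁] [IsProbabilityMeasure μ₂]
  (htriv : ∀ y, ‖charFun μ₁ y‖ = 1 → ‖charFun μ₂ y‖ = 1 → y = 0) (h2 : IsUnit (2 : ZMod n))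
  (ha : IsUnit a)
include htriv h2 ha

lemma charFun_eq_zero {y : ZMod n} (hy : (1 + a) * y ≠ 0) :
    charFun μ₁ y = 0 ∧ charFun μ₂ y = 0 := by
  obtain ⟨r, hr⟩ := (heyde.isUnit_one_sub htriv h2).exists_right_inv
  set z := (1 + a) * r * y
  have hz : z ≠ 0 := fun hz ↦ hy (by linear_combination (1 - a) * hz - (1 + a) * y * hr)
  have hnorm := heyde.norm_charFun_eq hr h2 ha
  have h₁₂ (h : ‖charFun μ₁ z‖ = 1) : ‖charFun μ₂ z‖ = 1 :=
    (hnorm z).1 ▸ norm_charFun_mul_eq_one h (2 * r)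
  have h₂₁ (h : ‖charFun μ₂ z‖ = 1) : ‖charFun μ₁ z‖ = 1 :=
    (hnorm z).2 ▸ norm_charFun_mul_eq_one h (2 * a * r)
  constructor
  · by_contra hy₁
    have h := congrArg norm (charFun_mul_charFun_two_mul_eq heyde hr y)
    rw [norm_mul, (hnorm y).2, norm_charFun_neg] at h
    have h₁ := mul_right_cancel₀ (norm_ne_zero_iff.mpr hy₁) (h.trans (one_mul _).symm)
    exact hz (htriv z h₁ (h₁₂ h₁))
  · by_contra hy₂
    have h := congrArg norm (charFun_two_mul_mul_charFun_eq heyde hr y)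
    rw [norm_mul, (hnorm y).1] at h
    have h₂ := mul_left_cancel₀ (norm_ne_zero_iff.mpr hy₂) (h.trans (mul_one _).symm)
    exact hz (htriv z (h₂₁ h₂) h₂)

lemma charFun_eq : charFun μ₁ = charFun μ₂ := by
  funext y
  by_cases hy : (1 + a) * y = 0
  · obtain ⟨r, hr⟩ := (heyde.isUnit_one_sub htriv h2).exists_right_inv
    have h := charFun_two_mul_mul_charFun_eq heyde hr y
    rwa [show (1 + a) * r * y = r * ((1 + a) * y) by ring, hy, mul_zero, charFun_zero, mul_one,
      show 2 * r * y = y by linear_combination r * hy + y * hr] at h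
  · rw [(heyde.charFun_eq_zero htriv h2 ha hy).1, (heyde.charFun_eq_zero htriv h2 ha hy).2]

end HeydeEquation

lemma heydeEquation_of_forall_eq_mul {α : ZMod n → ZMod n} {a : ZMod n} (hα : ∀ x, α x = a * x)
    {μ₁ μ₂ : Measure (ZMod n)}
    (heyde : ∀ u v : AddChar (ZMod n) Circle,
      (∫ x, ((u x * v x : Circle) : ℂ) ∂μ₁) * (∫ x, ((u x * v (α x) : Circle) : ℂ) ∂μ₂) =
      (∫ x, ((u x * (v x)⁻¹ : Circle) : ℂ) ∂μ₁) *
        (∫ x, ((u x * (v (α x))⁻¹ : Circle) : ℂ) ∂μ₂)) :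
    HeydeEquation μ₁ μ₂ a := fun u v ↦ by
  simpa [charFun, stdAddChar_apply, hα, mul_assoc, AddChar.mulShift_apply,
    ← AddChar.map_add_eq_mul, ← AddChar.map_neg_eq_inv, add_mul, sub_mul, sub_eq_add_neg,
    mul_left_comm] using heyde (toCircle.mulShift u) (toCircle.mulShift v)

open ProbabilityTheory in
lemma uniformOn_conv_eq_self [DiscreteMeasurableSpace (ZMod n)] {μ : Measure (ZMod n)}
    [IsProbabilityMeasure μ] {S : AddSubgroup (ZMod n)}
    (hμ : ∀ y, charFun μ y ≠ 0 → ∀ x ∈ S, y * x = 0) : uniformOn (S : Set (ZMod n)) ∗ μ = μ := by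
  have : IsProbabilityMeasure (uniformOn (S : Set (ZMod n))) :=
    isProbabilityMeasure_uniformOn (Set.toFinite _) ⟨0, S.zero_mem⟩
  refine charFun_injective (funext fun y ↦ ?_)
  rw [charFun_conv]
  by_cases hy : charFun μ y = 0
  · rw [hy, mul_zero]
  · rw [charFun_eq_one (μ := uniformOn (S : Set (ZMod n))), one_mul]
    filter_upwards [ae_cond_mem (.of_discrete (s := (S : Set (ZMod n))))] with x hx
    rw [hμ y hy x hx, AddChar.map_zero_eq_one]

end ZMod

open ProbabilityTheory in
/-- Heyde-type theorem for a finite cyclic group of odd order: if the characteristic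
functions of `μ₁, μ₂` satisfy the Heyde equation and have modulus `1` simultaneously only at
the trivial character, then `μ₁ = μ₂ = μ` and the uniform distribution on `(I + α)(X)` is a
factor of `μ`. -/
theorem stmt_18 (n : ℕ) (hn : Odd n) [NeZero n]
    [MeasurableSpace (ZMod n)] [DiscreteMeasurableSpace (ZMod n)]
    (α : ZMod n ≃+ ZMod n)
    (μ₁ μ₂ : Measure (ZMod n)) [IsProbabilityMeasure μ₁] [IsProbabilityMeasure μ₂]
    (heyde : ∀ u v : AddChar (ZMod n) Circle,
      (∫ x, ((u x * v x : Circle) : ℂ) ∂μ₁) *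
        (∫ x, ((u x * v (α x) : Circle) : ℂ) ∂μ₂) =
      (∫ x, ((u x * (v x)⁻¹ : Circle) : ℂ) ∂μ₁) *
        (∫ x, ((u x * (v (α x))⁻¹ : Circle) : ℂ) ∂μ₂))
    (htriv : ∀ y : AddChar (ZMod n) Circle,
      ‖∫ x, (y x : ℂ) ∂μ₁‖ = 1 → ‖∫ x, (y x : ℂ) ∂μ₂‖ = 1 → y = 1)
    (S : AddSubgroup (ZMod n)) (hS : ∀ x : ZMod n, x ∈ S ↔ ∃ z : ZMod n, z + α z = x) :
    μ₁ = μ₂ ∧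
      μ₁ = (((Nat.card S : ℝ≥0∞))⁻¹ •
        Measure.count.restrict (S : Set (ZMod n))).conv μ₁ := by
  have h2 : IsUnit (2 : ZMod n) := by
    rw [← Nat.cast_ofNat, ZMod.isUnit_iff_coprime]
    exact Nat.coprime_two_left.mpr hn
  have ha : IsUnit (α 1) := by
    obtain ⟨b, hb⟩ := α.surjective 1
    exact .of_mul_eq_one b (by rw [← ZMod.map_eq_map_one_mul, hb])
  have htriv' (y : ZMod n) (h₁ : ‖ZMod.charFun μ₁ y‖ = 1) (h₂ : ‖ZMod.charFun μ₂ y‖ = 1) :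
      y = 0 :=
    not_not.mp fun hy ↦ ZMod.isPrimitive_toCircle hy (htriv _ h₁ h₂)
  have heyde' := ZMod.heydeEquation_of_forall_eq_mul (ZMod.map_eq_map_one_mul α) heyde
  have hν : (Nat.card S : ℝ≥0∞)⁻¹ • Measure.count.restrict (S : Set (ZMod n)) = uniformOn S :=
    (uniformOn_eq_smul_count_restrict (Set.toFinite _)).symm
  rw [hν]
  refine ⟨ZMod.charFun_injective (heyde'.charFun_eq htriv' h2 ha),
    (ZMod.uniformOn_conv_eq_self fun y hy x hx ↦ ?_).symm⟩
  obtain ⟨z, rfl⟩ := (hS x).mp hx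
  have hy' : (1 + α 1) * y = 0 := not_not.mp fun h ↦ hy (heyde'.charFun_eq_zero htriv' h2 ha h).1
  rw [ZMod.map_eq_map_one_mul α, show y * (z + α 1 * z) = (1 + α 1) * y * z by ring, hy', zero_mul]
end

section
/- Let X be a torsion abelian group with cyclic p-components and no elements of order 2, with compact dual Y, and μ a probability distribution on X with {y ∈ Y : |μ̂(y)| = 1} = {0}. If the characteristic function μ̂ satisfies μ̂(u+v) μ̂(u+α̃v) = μ̂(u−v) μ̂(u−α̃v) for all u, v ∈ Y where α̃ is the adjoint of an automorphism α of X, then Ker(I − α̃) = {0}, and consequently I − α is an automorphism of X. -/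
/-!
For an `α`-invariant character `y`, the Heyde equation at `u = v = y` reads `μ̂(2y)² = 1`, so
`2y = 0` by the hypothesis on `μ̂`, and then `y = 0` because doubling is surjective on a torsion
group without `2`-torsion. Characters into the circle separate the points of `X ⧸ (I - α) X`, so
the absence of nonzero invariant characters makes `I - α` surjective. On a torsion group with
finite primary components every surjective endomorphism `f` is injective: it maps each primary
component `X_p` onto itself, since if `f z ∈ X_p` then the prime-to-`p` multiple `m • z` of `z`
lies in `X_p` and `f (m • z) = m • f z` generates the same subgroup as `f z`.
-/

open MeasureTheory Function

lemma exists_add_self_eq_of_isOfFinAddOrder {X : Type*} [AddMonoid X]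
    (h2 : ∀ x : X, x + x = 0 → x = 0) {x : X} (hx : IsOfFinAddOrder x) : ∃ z, z + z = x := by
  obtain ⟨k, hk⟩ : Odd (addOrderOf x) := by
    rw [Nat.odd_iff, ← Nat.two_dvd_ne_zero]
    rintro ⟨k, hk⟩
    have hk0 : k ≠ 0 := by rintro rfl; exact hx.addOrderOf_pos.ne' hk
    refine nsmul_ne_zero_of_lt_addOrderOf (x := x) hk0 (by omega) (h2 _ ?_)
    rw [← add_nsmul, ← two_mul, ← hk, addOrderOf_nsmul_eq_zero]
  refine ⟨(k + 1) • x, ?_⟩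
  rw [← add_nsmul, show k + 1 + (k + 1) = addOrderOf x + 1 by omega, add_nsmul,
    addOrderOf_nsmul_eq_zero, zero_add, one_nsmul]

lemma AddChar.eq_one_of_mul_self_eq_one {A M : Type*} [AddMonoid A] [CommMonoid M]
    (hA : ∀ x : A, ∃ z, z + z = x) {ψ : AddChar A M} (hψ : ψ * ψ = 1) : ψ = 1 := by
  ext x
  obtain ⟨z, rfl⟩ := hA x
  rw [AddChar.map_add_eq_mul, ← AddChar.mul_apply, hψ, AddChar.one_apply, AddChar.one_apply]

lemma norm_integral_mul_self_eq_one_of_heyde {X : Type*} [AddMonoid X] [MeasurableSpace X]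
    (μ : Measure X) [IsProbabilityMeasure μ] {α : X → X} {y : AddChar X Circle}
    (hy : ∀ x, y (α x) = y x)
    (h : (∫ x, ((y x * y x : Circle) : ℂ) ∂μ) *
        (∫ x, ((y x * y (α x) : Circle) : ℂ) ∂μ) =
      (∫ x, ((y x * (y x)⁻¹ : Circle) : ℂ) ∂μ) *
        (∫ x, ((y x * (y (α x))⁻¹ : Circle) : ℂ) ∂μ)) :
    ‖∫ x, ((y * y) x : ℂ) ∂μ‖ = 1 := by
  simp only [hy, mul_inv_cancel, Circle.coe_one, integral_const, probReal_univ, one_smul,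
    mul_one] at h
  have hnorm := congrArg norm h
  rw [norm_mul, norm_one, ← sq, pow_eq_one_iff_of_nonneg (norm_nonneg _) two_ne_zero] at hnorm
  simpa only [AddChar.mul_apply] using hnorm

noncomputable def AddCircle.ratToCircle : AddChar (AddCircle (1 : ℚ)) Circle :=
  AddCircle.toCircle_addChar.compAddMonoidHom
    (QuotientAddGroup.map _ _ ((Rat.castHom ℝ : ℚ →+* ℝ) : ℚ →+ ℝ) (by
      rintro _ ⟨k, rfl⟩
      exact ⟨k, by simp⟩) : AddCircle (1 : ℚ) →+ AddCircle (1 : ℝ))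

lemma AddCircle.eq_zero_of_ratToCircle_eq_one {x : AddCircle (1 : ℚ)}
    (hx : AddCircle.ratToCircle x = 1) : x = 0 := by
  induction x using QuotientAddGroup.induction_on with
  | H q =>
  have h : ((q : ℝ) : AddCircle (1 : ℝ)) = 0 := by
    apply AddCircle.injective_toCircle one_ne_zero
    simpa [AddCircle.ratToCircle, AddCircle.toCircle_addChar] using hx
  obtain ⟨n, hn⟩ := (AddCircle.coe_eq_zero_iff 1).mp h
  exact (AddCircle.coe_eq_zero_iff 1).mpr ⟨n, by rw [zsmul_one] at hn ⊢; exact_mod_cast hn⟩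

lemma AddChar.exists_apply_ne_one_of_ne_zero {A : Type*} [AddCommGroup A] {a : A} (ha : a ≠ 0) :
    ∃ ψ : AddChar A Circle, ψ a ≠ 1 := by
  obtain ⟨c, hc⟩ := CharacterModule.exists_character_apply_ne_zero_of_ne_zero ha
  exact ⟨AddCircle.ratToCircle.compAddMonoidHom c,
    fun h => hc (AddCircle.eq_zero_of_ratToCircle_eq_one h)⟩

lemma AddMonoidHom.surjective_of_forall_addChar_comp_eq_one {A B : Type*} [AddCommGroup A]
    [AddCommGroup B] (f : A →+ B)
    (h : ∀ ψ : AddChar B Circle, ψ.compAddMonoidHom f = 1 → ψ = 1) : Surjective f := by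
  intro b
  by_contra hb
  have hne : (QuotientAddGroup.mk b : B ⧸ f.range) ≠ 0 := by
    rwa [Ne, QuotientAddGroup.eq_zero_iff, AddMonoidHom.mem_range]
  obtain ⟨ψ, hψ⟩ := AddChar.exists_apply_ne_one_of_ne_zero hne
  have hψf : (ψ.compAddMonoidHom (QuotientAddGroup.mk' f.range)).compAddMonoidHom f = 1 := by
    ext a
    simp [(QuotientAddGroup.eq_zero_iff _).mpr (AddMonoidHom.mem_range.mpr ⟨a, rfl⟩)]
  exact hψ (DFunLike.congr_fun (h _ hψf) b)

section PrimaryComponent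
variable {X : Type*} [AddCommGroup X] {p : ℕ}

lemma exists_coprime_nsmul_mem_primaryComponent (hp : p.Prime) {z : X} (hz : IsOfFinAddOrder z) :
    ∃ m : ℕ, p.Coprime m ∧ m • z ∈ AddCommGroup.primaryComponent X p := by
  have hn : addOrderOf z ≠ 0 := hz.addOrderOf_pos.ne'
  refine ⟨_, Nat.coprime_ordCompl hp hn, AddCommGroup.mem_primaryComponent.mpr
    ⟨(addOrderOf z).factorization p, ?_⟩⟩
  rw [smul_smul, Nat.ordProj_mul_ordCompl_eq_self, addOrderOf_nsmul_eq_zero]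

lemma exists_nsmul_ne_zero_mem_primaryComponent {x : X} (hx : IsOfFinAddOrder x)
    (hx0 : x ≠ 0) :
    ∃ p, p.Prime ∧
      ∃ m : ℕ, m • x ≠ 0 ∧ m • x ∈ AddCommGroup.primaryComponent X p := by
  have hp : (addOrderOf x).minFac.Prime :=
    Nat.minFac_prime (mt AddMonoid.addOrderOf_eq_one_iff.mp hx0)
  obtain ⟨m, hm, hmem⟩ := exists_coprime_nsmul_mem_primaryComponent hp hx
  refine ⟨_, hp, m, fun h => ?_, hmem⟩
  have hcop := Nat.Coprime.coprime_dvd_right (addOrderOf_dvd_of_nsmul_eq_zero h) hm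
  exact hp.one_lt.ne' (Nat.Coprime.eq_one_of_dvd hcop (Nat.minFac_dvd _))

lemma AddMonoidHom.surjOn_primaryComponent (htor : ∀ x : X, IsOfFinAddOrder x) [Fact p.Prime]
    {f : X →+ X} (hf : Surjective f) :
    Set.SurjOn f (AddCommGroup.primaryComponent X p) (AddCommGroup.primaryComponent X p) := by
  intro s hs
  obtain ⟨z, rfl⟩ := hf s
  obtain ⟨m, hm, hmz⟩ := exists_coprime_nsmul_mem_primaryComponent (p := p) Fact.out (htor z)
  obtain ⟨n, hn⟩ := AddCommGroup.mem_primaryComponent_iff_addOrderOf.mp hs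
  obtain ⟨k, hk⟩ := exists_nsmul_eq_self_of_coprime (x := f z) (n := m) (by
    rw [hn]; exact (hm.pow_left n).symm)
  exact ⟨k • m • z, AddSubgroup.nsmul_mem _ hmz k, by rw [map_nsmul, map_nsmul, hk]⟩

lemma AddMonoidHom.mapsTo_primaryComponent (f : X →+ X) :
    Set.MapsTo f (AddCommGroup.primaryComponent X p) (AddCommGroup.primaryComponent X p) := by
  rintro x ⟨k, hk⟩
  exact ⟨k, by rw [← map_nsmul, hk, map_zero]⟩

theorem AddMonoidHom.injective_of_surjective_of_finite_primaryComponent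
    (htor : ∀ x : X, IsOfFinAddOrder x)
    (hfin : ∀ p, p.Prime → (AddCommGroup.primaryComponent X p : Set X).Finite)
    {f : X →+ X} (hf : Surjective f) : Injective f := by
  refine (injective_iff_map_eq_zero f).mpr fun x hx => by_contra fun hx0 => ?_
  obtain ⟨p, hp, m, hm0, hm⟩ := exists_nsmul_ne_zero_mem_primaryComponent (htor x) hx0
  have : Fact p.Prime := ⟨hp⟩
  have hinj := (((hfin p hp).surjOn_iff_bijOn_of_mapsTo f.mapsTo_primaryComponent).mp
    (f.surjOn_primaryComponent htor hf)).injOn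
  exact hm0 (hinj hm (zero_mem _) (by rw [map_nsmul, hx, smul_zero, map_zero]))

lemma finite_primaryComponent (htor : ∀ x : X, IsOfFinAddOrder x)
    (hcyc : IsAddCyclic (AddCommGroup.primaryComponent X p)) :
    (AddCommGroup.primaryComponent X p : Set X).Finite := by
  obtain ⟨g, hg⟩ := hcyc.exists_generator
  refine (htor (g : X)).finite_zmultiples.subset fun x hx => ?_
  obtain ⟨k, hk⟩ := AddSubgroup.mem_zmultiples_iff.mp (hg ⟨x, hx⟩)
  exact AddSubgroup.mem_zmultiples_iff.mpr ⟨k, congrArg Subtype.val hk⟩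

end PrimaryComponent

theorem stmt_19_general {X : Type*} [AddCommGroup X] [MeasurableSpace X]
    (htor : ∀ x : X, IsOfFinAddOrder x)
    (hcyc : ∀ (p : ℕ) (hp : Fact p.Prime), IsAddCyclic (AddCommGroup.primaryComponent X p))
    (h2 : ∀ x : X, x + x = 0 → x = 0)
    (α : X ≃+ X)
    (μ : Measure X) [IsProbabilityMeasure μ]
    (htriv : ∀ y : AddChar X Circle, ‖(∫ x, (y x : ℂ) ∂μ)‖ = 1 → y = 1)
    (heyde : ∀ u v : AddChar X Circle,
      (∫ x, ((u x * v x : Circle) : ℂ) ∂μ) *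
        (∫ x, ((u x * v (α x) : Circle) : ℂ) ∂μ) =
      (∫ x, ((u x * (v x)⁻¹ : Circle) : ℂ) ∂μ) *
        (∫ x, ((u x * (v (α x))⁻¹ : Circle) : ℂ) ∂μ)) :
    (∀ y : AddChar X Circle, (∀ x : X, y (α x) = y x) → y = 1) ∧
      Function.Bijective (fun x : X => x - α x) := by
  have hfixed : ∀ y : AddChar X Circle, (∀ x, y (α x) = y x) → y = 1 := fun y hy =>
    AddChar.eq_one_of_mul_self_eq_one (fun x => exists_add_self_eq_of_isOfFinAddOrder h2 (htor x))
      (htriv _ (norm_integral_mul_self_eq_one_of_heyde μ hy (heyde y y)))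
  have hsurj : Surjective (AddMonoidHom.id X - α.toAddMonoidHom) :=
    AddMonoidHom.surjective_of_forall_addChar_comp_eq_one _ fun y hy => hfixed y fun x =>
      (by simpa [AddChar.map_sub_eq_div, div_eq_one] using DFunLike.congr_fun hy x :
        y x = y (α x)).symm
  exact ⟨hfixed, AddMonoidHom.injective_of_surjective_of_finite_primaryComponent htor
    (fun p hp => finite_primaryComponent htor (hcyc p ⟨hp⟩)) hsurj, hsurj⟩

/-- If `μ` on a discrete torsion abelian group with cyclic `p`-components and no 2-torsion
has `{y : |μ̂(y)| = 1} = {0}` and its characteristic function satisfies the Heyde equation,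
then `Ker(I − α̃)` is trivial and `I − α` is an automorphism of `X`. -/
theorem stmt_19 {X : Type*} [AddCommGroup X] [MeasurableSpace X] [DiscreteMeasurableSpace X]
    (htor : ∀ x : X, IsOfFinAddOrder x)
    (hcyc : ∀ (p : ℕ) (hp : Fact p.Prime), IsAddCyclic (AddCommGroup.primaryComponent X p))
    (h2 : ∀ x : X, x + x = 0 → x = 0)
    (α : X ≃+ X)
    (μ : Measure X) [IsProbabilityMeasure μ]
    (htriv : ∀ y : AddChar X Circle, ‖(∫ x, (y x : ℂ) ∂μ)‖ = 1 → y = 1)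
    (heyde : ∀ u v : AddChar X Circle,
      (∫ x, ((u x * v x : Circle) : ℂ) ∂μ) *
        (∫ x, ((u x * v (α x) : Circle) : ℂ) ∂μ) =
      (∫ x, ((u x * (v x)⁻¹ : Circle) : ℂ) ∂μ) *
        (∫ x, ((u x * (v (α x))⁻¹ : Circle) : ℂ) ∂μ)) :
    (∀ y : AddChar X Circle, (∀ x : X, y (α x) = y x) → y = 1) ∧
      Function.Bijective (fun x : X => x - α x) :=
  stmt_19_general htor hcyc h2 α μ htriv heyde
end
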